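/- Second family of entropy pairs: Let g : ℝ → ℝ be C¹ with g(0) = 0. On U = {(σ,β) ∈ ℝ² : σ > |β|} define η₂(σ,β) = ∫_{β−σ}^{β+σ} g(s) ds and q₂(σ,β) = ∫_{β−σ}^{β+σ} g(s)/s ds. Then η₂ and q₂ are C² on U, with ∂_σ q₂(σ,β) = g(β+σ)/(β+σ) + g(β−σ)/(β−σ) and ∂_β q₂(σ,β) = g(β+σ)/(β+σ) − g(β−σ)/(β−σ), and (η₂,q₂) is an entropy pair, i.e. on U: ∂_σ q₂ = (β ∂_σ η₂ − σ ∂_β η₂)/(β² − σ²) and ∂_β q₂ = (β ∂_β η₂ − σ ∂_σ η₂)/(β² − σ²). -/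

import Mathlib

open MeasureTheory Set

noncomputable section

/-- Phase-space region `U = {(σ,β) : σ > |β|}`. -/
def U : Set (ℝ × ℝ) := {p | |p.2| < p.1}

/-- `(η,q)` is an entropy pair for the γ = 3 isentropic Carrollian system:
both are C² on `U` and the gradient relations
`∂_σ q = (β ∂_σ η − σ ∂_β η)/(β² − σ²)`, `∂_β q = (β ∂_β η − σ ∂_σ η)/(β² − σ²)` hold on `U`. -/
structure IsEntropyPair (η q : ℝ → ℝ → ℝ) : Prop where
  smooth_eta : ContDiffOn ℝ 2 (fun p : ℝ × ℝ => η p.1 p.2) U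
  smooth_q : ContDiffOn ℝ 2 (fun p : ℝ × ℝ => q p.1 p.2) U
  grad_sigma : ∀ s b : ℝ, (s, b) ∈ U →
    deriv (fun s' => q s' b) s
      = (b * deriv (fun s' => η s' b) s - s * deriv (fun b' => η s b') b) / (b^2 - s^2)
  grad_beta : ∀ s b : ℝ, (s, b) ∈ U →
    deriv (fun b' => q s b') b
      = (b * deriv (fun b' => η s b') b - s * deriv (fun s' => η s' b) s) / (b^2 - s^2)

/-- The second entropy `η₂(σ,β) = ∫_{β−σ}^{β+σ} g(u) du`. -/
def eta2 (g : ℝ → ℝ) (s b : ℝ) : ℝ := ∫ u in (b - s)..(b + s), g u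

/-- The second entropy flux `q₂(σ,β) = ∫_{β−σ}^{β+σ} g(u)/u du`. -/
def q2flux (g : ℝ → ℝ) (s b : ℝ) : ℝ := ∫ u in (b - s)..(b + s), g u / u

/-!
Both `η₂` and `q₂` are `∫_{β−σ}^{β+σ} f` for a continuous `f`: for `q₂` take `f = dslope g 0`,
which agrees with `g(u)/u` off `0` because `g 0 = 0`, and is continuous because `g` is
differentiable at `0`. Such an integral is `F(β+σ) − F(β−σ)` for a primitive `F` of `f`, whence
its partial derivatives `f(β+σ) ± f(β−σ)`; the entropy relations then reduce to an algebraic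
identity in `β + σ` and `β − σ`, and the regularity on `U` follows since `f` is `C¹` away from
`0` and `β − σ < 0 < β + σ` there.
-/

theorem mem_U_iff {s b : ℝ} : (s, b) ∈ U ↔ b - s < 0 ∧ 0 < b + s := by
  rw [U, mem_ofPred_eq, abs_lt]
  constructor <;> rintro ⟨h₁, h₂⟩ <;> constructor <;> linarith

section DSlope

variable {𝕜 E : Type*} [NontriviallyNormedField 𝕜] [NormedAddCommGroup E] [NormedSpace 𝕜 E]

theorem Continuous.dslope {f : 𝕜 → E} (hf : Continuous f) {a : 𝕜} (hd : DifferentiableAt 𝕜 f a) :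
    Continuous (dslope f a) :=
  continuousOn_univ.1 <| (continuousOn_dslope Filter.univ_mem).2 ⟨hf.continuousOn, hd⟩

theorem ContDiffOn.dslope_of_notMem {f : 𝕜 → E} {n : WithTop ℕ∞} {s : Set 𝕜}
    (hf : ContDiffOn 𝕜 n f s) {a : 𝕜} (ha : a ∉ s) : ContDiffOn 𝕜 n (dslope f a) s := by
  have hne {x} (hx : x ∈ s) : x ≠ a := ne_of_mem_of_not_mem hx ha
  refine ContDiffOn.congr (f := fun x => (x - a)⁻¹ • (f x - f a)) ?_ fun x hx => ?_
  · exact ((contDiffOn_id.sub contDiffOn_const).inv fun x hx => sub_ne_zero.2 (hne hx)).smul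
      (hf.sub contDiffOn_const)
  · rw [dslope_of_ne _ (hne hx), slope_def_module]

theorem dslope_zero_eq_div {g : 𝕜 → 𝕜} (hg0 : g 0 = 0) {u : 𝕜} (hu : u ≠ 0) :
    dslope g 0 u = g u / u := by
  rw [dslope_of_ne _ hu, slope_def_field, hg0, sub_zero, sub_zero]

end DSlope

section SymmetricIntegral

variable {f : ℝ → ℝ}

theorem Continuous.contDiffOn_primitive (hf : Continuous f) (a : ℝ) {n : ℕ∞} {s : Set ℝ}
    (hs : IsOpen s) (hfs : ContDiffOn ℝ n f s) :
    ContDiffOn ℝ (n + 1) (fun x => ∫ u in a..x, f u) s := by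
  rw [contDiffOn_succ_iff_deriv_of_isOpen hs]
  refine ⟨fun x _ => (hf.integral_hasStrictDerivAt a x).hasDerivAt.hasDerivWithinAt
    |>.differentiableWithinAt, by simp, ?_⟩
  rwa [funext (hf.deriv_integral f a)]

theorem integral_sub_add_eq_sub (hf : Continuous f) (s b : ℝ) :
    ∫ u in (b - s)..(b + s), f u = (∫ u in 0..(b + s), f u) - ∫ u in 0..(b - s), f u :=
  (intervalIntegral.integral_interval_sub_left (hf.intervalIntegrable _ _)
    (hf.intervalIntegrable _ _)).symm

theorem hasDerivAt_integral_sub_add_left (hf : Continuous f) (s b : ℝ) :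
    HasDerivAt (fun s' => ∫ u in (b - s')..(b + s'), f u) (f (b + s) + f (b - s)) s := by
  simp_rw [integral_sub_add_eq_sub hf]
  have hF x := (hf.integral_hasStrictDerivAt 0 x).hasDerivAt
  exact (((hF _).comp_const_add b s).fun_sub ((hF _).comp_const_sub b s)).congr_deriv
    (sub_neg_eq_add _ _)

theorem hasDerivAt_integral_sub_add_right (hf : Continuous f) (s b : ℝ) :
    HasDerivAt (fun b' => ∫ u in (b' - s)..(b' + s), f u) (f (b + s) - f (b - s)) b := by
  simp_rw [integral_sub_add_eq_sub hf]
  have hF x := (hf.integral_hasStrictDerivAt 0 x).hasDerivAt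
  exact ((hF _).comp_add_const b s).fun_sub ((hF _).comp_sub_const b s)

theorem contDiffOn_integral_sub_add (hf : Continuous f) {n : ℕ∞}
    (hneg : ContDiffOn ℝ n f (Iio 0)) (hpos : ContDiffOn ℝ n f (Ioi 0)) :
    ContDiffOn ℝ (n + 1) (fun p : ℝ × ℝ => ∫ u in (p.2 - p.1)..(p.2 + p.1), f u) U := by
  simp_rw [integral_sub_add_eq_sub hf]
  exact ((hf.contDiffOn_primitive 0 isOpen_Ioi hpos).comp
      (contDiff_snd.add contDiff_fst).contDiffOn fun p hp => (mem_U_iff.1 hp).2).sub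
    ((hf.contDiffOn_primitive 0 isOpen_Iio hneg).comp
      (contDiff_snd.sub contDiff_fst).contDiffOn fun p hp => (mem_U_iff.1 hp).1)

end SymmetricIntegral

section SecondFamily

variable {g : ℝ → ℝ}

theorem q2flux_eq_integral_dslope (hg0 : g 0 = 0) :
    q2flux g = fun s b => ∫ u in (b - s)..(b + s), dslope g 0 u :=
  funext₂ fun _ _ => intervalIntegral.integral_congr_ae <|
    (Measure.ae_ne volume 0).mono fun _ hu _ => (dslope_zero_eq_div hg0 hu).symm

theorem contDiffOn_eta2 (hg : ContDiff ℝ 1 g) :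
    ContDiffOn ℝ 2 (fun p : ℝ × ℝ => eta2 g p.1 p.2) U :=
  contDiffOn_integral_sub_add (n := 1) hg.continuous hg.contDiffOn hg.contDiffOn

theorem contDiffOn_q2flux (hg : ContDiff ℝ 1 g) (hg0 : g 0 = 0) :
    ContDiffOn ℝ 2 (fun p : ℝ × ℝ => q2flux g p.1 p.2) U := by
  rw [q2flux_eq_integral_dslope hg0]
  exact contDiffOn_integral_sub_add (n := 1)
    (hg.continuous.dslope (hg.differentiable one_ne_zero 0))
    (hg.contDiffOn.dslope_of_notMem self_notMem_Iio)
    (hg.contDiffOn.dslope_of_notMem self_notMem_Ioi)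

theorem deriv_q2flux (hg : ContDiff ℝ 1 g) (hg0 : g 0 = 0) {s b : ℝ} (hsb : (s, b) ∈ U) :
    deriv (fun s' => q2flux g s' b) s = g (b + s) / (b + s) + g (b - s) / (b - s) ∧
    deriv (fun b' => q2flux g s b') b = g (b + s) / (b + s) - g (b - s) / (b - s) := by
  obtain ⟨hM, hP⟩ := mem_U_iff.1 hsb
  have hc : Continuous (dslope g 0) := hg.continuous.dslope (hg.differentiable one_ne_zero 0)
  simp only [q2flux_eq_integral_dslope hg0, (hasDerivAt_integral_sub_add_left hc s b).deriv,
    (hasDerivAt_integral_sub_add_right hc s b).deriv,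
    dslope_zero_eq_div hg0 hP.ne', dslope_zero_eq_div hg0 hM.ne, and_self]

end SecondFamily

/-- **Second family of entropy pairs** (Lemma 5.2, second part): for `g ∈ C¹(ℝ)` with
`g(0) = 0`, the pair `(η₂,q₂)` is C² on `U`, the partial derivatives of `q₂` are
`∂_σ q₂ = g(β+σ)/(β+σ) + g(β−σ)/(β−σ)` and `∂_β q₂ = g(β+σ)/(β+σ) − g(β−σ)/(β−σ)`,
and `(η₂,q₂)` is an entropy pair. -/
theorem second_entropy_family (g : ℝ → ℝ) (hg : ContDiff ℝ 1 g) (hg0 : g 0 = 0) :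
    ContDiffOn ℝ 2 (fun p : ℝ × ℝ => eta2 g p.1 p.2) U ∧
    ContDiffOn ℝ 2 (fun p : ℝ × ℝ => q2flux g p.1 p.2) U ∧
    (∀ s b : ℝ, (s, b) ∈ U →
      deriv (fun s' => q2flux g s' b) s = g (b + s) / (b + s) + g (b - s) / (b - s) ∧
      deriv (fun b' => q2flux g s b') b = g (b + s) / (b + s) - g (b - s) / (b - s)) ∧
    IsEntropyPair (eta2 g) (q2flux g) := by
  have hη := contDiffOn_eta2 hg
  have hq := contDiffOn_q2flux hg hg0
  refine ⟨hη, hq, fun s b hsb => deriv_q2flux hg hg0 hsb, hη, hq, fun s b hsb => ?_,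
    fun s b hsb => ?_⟩ <;>
  · obtain ⟨hM, hP⟩ := mem_U_iff.1 hsb
    simp only [deriv_q2flux hg hg0 hsb, eta2,
      (hasDerivAt_integral_sub_add_left hg.continuous s b).deriv,
      (hasDerivAt_integral_sub_add_right hg.continuous s b).deriv]
    field_simp [hM.ne, hP.ne', show b ^ 2 - s ^ 2 = (b + s) * (b - s) by ring]
    ring
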